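/- arXiv:0907.5364 — 4 statements merged into one kernel-verified Lean document; each statement's English description precedes it below -/
import Mathlib

section
/- Assume a₁ ≠ d₁, the denominators b₁ + b₁d₁/(a₁−d₁), b₂ − b₁(b₁d₁+(d₁−a₁)kρ)/((a₁−d₁)²k), and b₁²d₁ − b₂(a₁−d₁)²k + b₁(−a₁+d₁)kρ are nonzero. Then the characteristic polynomial (over ℂ) of the Jacobian matrix of the right-hand side of system (L1) at p_3 = ( b₁d₁/(a₁−d₁), −b₁(b₁d₁+(d₁−a₁)kρ)/((a₁−d₁)²k), 0 ) factors as (t − μ)(t − λ₊)(t − λ₋), where λ₊ and λ₋ are the two complex numbers (1/(2a₁(a₁−d₁)k))(−a₁b₁d₁ − b₁d₁² + a₁d₁kρ − d₁²kρ ± √Δ) with Δ = d₁(−4a₁(a₁−d₁)²k(−b₁d₁ + (a₁−d₁)kρ) + d₁(a₁(b₁−kρ) + d₁(b₁+kρ))²) (√Δ denoting a complex square root of Δ), and μ = −d₂ + a₂b₁(b₁d₁ + (−a₁+d₁)kρ)/(b₁²d₁ − b₂(a₁−d₁)²k + b₁(−a₁+d₁)kρ). -/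
/-!
At `p₃` the predator coordinate vanishes, so the last row of the Jacobian is `(0, 0, ∂ż/∂z)` and the
characteristic polynomial splits as `(X - ∂ż/∂z) (X² - τ X + δ)`, with `τ` and `δ` the trace and
determinant of the `(x, y)` block. A direct computation at `p₃` gives `∂ż/∂z = μ`, `τ = 2cT` and
`δ = c²(T² - Δ)`, where `c = 1/(2a₁(a₁-d₁)k)` and `T` is the part of the numerator of `λ±` outside
the square root; since `s² = Δ`, the quadratic is `(X - c(T + s)) (X - c(T - s))`.
-/

open Polynomial

/-- The right-hand side of the tritrophic food chain system (L1), as a map `ℝ³ → ℝ³`. -/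
noncomputable def L1rhs (a₁ a₂ b₁ b₂ d₁ d₂ k ρ : ℝ) (p : Fin 3 → ℝ) : Fin 3 → ℝ :=
  ![p 0 * (ρ - p 0 / k - a₁ * p 1 / (b₁ + p 0)),
    p 1 * (a₁ * p 0 / (b₁ + p 0) - a₂ * p 2 / (b₂ + p 1) - d₁),
    p 2 * (a₂ * p 1 / (b₂ + p 1) - d₂)]

noncomputable def jacobian (f : (Fin 3 → ℝ) → Fin 3 → ℝ) (p : Fin 3 → ℝ) :
    Matrix (Fin 3) (Fin 3) ℝ :=
  Matrix.of fun i j => deriv (fun s : ℝ => f (Function.update p j s) i) (p j)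

section
variable {α : Type*} (x y z s : α)

theorem update_vec3_zero : Function.update ![x, y, z] 0 s = ![s, y, z] := by
  ext i; fin_cases i <;> rfl

theorem update_vec3_one : Function.update ![x, y, z] 1 s = ![x, s, z] := by
  ext i; fin_cases i <;> rfl

theorem update_vec3_two : Function.update ![x, y, z] 2 s = ![x, y, s] := by
  ext i; fin_cases i <;> rfl
end

theorem hasDerivAt_div_const_add {c b x : ℝ} (h : b + x ≠ 0) :
    HasDerivAt (fun s => c / (b + s)) (-(c / (b + x) ^ 2)) x :=
  ((hasDerivAt_const x c).div ((hasDerivAt_id' x).const_add b) h).congr_deriv (by ring)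

theorem hasDerivAt_mul_div_const_add {a b x : ℝ} (h : b + x ≠ 0) :
    HasDerivAt (fun s => a * s / (b + s)) (a * b / (b + x) ^ 2) x :=
  (((hasDerivAt_id' x).const_mul a).div ((hasDerivAt_id' x).const_add b) h).congr_deriv (by ring)

theorem deriv_id_mul_of_hasDerivAt {f : ℝ → ℝ} {f' x : ℝ} (hf : HasDerivAt f f' x) :
    deriv (fun s => s * f s) x = f x + x * f' :=
  ((hasDerivAt_id' x).mul hf).deriv.trans (by ring)

theorem jacobian_L1rhs {a₁ a₂ b₁ b₂ d₁ d₂ k ρ x y z : ℝ} (hbx : b₁ + x ≠ 0) (hby : b₂ + y ≠ 0) :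
    jacobian (L1rhs a₁ a₂ b₁ b₂ d₁ d₂ k ρ) ![x, y, z] =
      !![ρ - x / k - a₁ * y / (b₁ + x) + x * (-(1 / k) + a₁ * y / (b₁ + x) ^ 2),
          -(x * (a₁ / (b₁ + x))), 0;
        y * (a₁ * b₁ / (b₁ + x) ^ 2),
          a₁ * x / (b₁ + x) - a₂ * z / (b₂ + y) - d₁ + y * (a₂ * z / (b₂ + y) ^ 2),
          -(y * (a₂ / (b₂ + y)));
        0, z * (a₂ * b₂ / (b₂ + y) ^ 2), a₂ * y / (b₂ + y) - d₂] := by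
  ext i j
  fin_cases i <;> fin_cases j <;>
    simp only [jacobian, L1rhs, Fin.zero_eta, Fin.mk_one, Fin.reduceFinMk, update_vec3_zero,
      update_vec3_one, update_vec3_two, Matrix.of_apply, Matrix.cons_val', Matrix.cons_val_zero,
      Matrix.cons_val_one, Matrix.cons_val_two, Matrix.empty_val', Matrix.cons_val_fin_one,
      Matrix.tail_cons, Matrix.vecHead]
  · have h : HasDerivAt (fun s => ρ - s / k - a₁ * y / (b₁ + s))
        (-(1 / k) + a₁ * y / (b₁ + x) ^ 2) x :=
      ((((hasDerivAt_id' x).div_const k).const_sub ρ).sub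
        (hasDerivAt_div_const_add hbx)).congr_deriv (by ring)
    exact deriv_id_mul_of_hasDerivAt h
  · simp
  · simp
  · exact ((((hasDerivAt_mul_div_const_add hbx).sub_const _).sub_const d₁).const_mul y).deriv
  · have h : HasDerivAt (fun s => a₁ * x / (b₁ + x) - a₂ * z / (b₂ + s) - d₁)
        (a₂ * z / (b₂ + y) ^ 2) y :=
      (((hasDerivAt_const y _).sub (hasDerivAt_div_const_add hby)).sub_const d₁).congr_deriv
        (by ring)
    exact deriv_id_mul_of_hasDerivAt h
  · simp
  · simp
  · exact (((hasDerivAt_mul_div_const_add hby).sub_const d₂).const_mul z).deriv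
  · simp

theorem Matrix.charpoly_fin_three_of_bottom_row {R : Type*} [CommRing R] (a b g c d e f : R) :
    (!![a, b, g; c, d, e; 0, 0, f]).charpoly
      = (X - C f) * (X ^ 2 - C (a + d) * X + C (a * d - b * c)) := by
  rw [Matrix.charpoly, Matrix.det_fin_three]
  simp only [Fin.isValue, charmatrix_apply_eq, of_apply, cons_val', cons_val_zero,
    cons_val_fin_one, cons_val_one, cons_val, ne_eq, Fin.reduceEq, not_false_eq_true,
    charmatrix_apply_ne, mul_neg, map_zero, neg_zero, mul_zero, sub_zero, zero_ne_one, one_ne_zero,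
    neg_mul, neg_neg, add_zero, map_add, map_sub, map_mul]
  ring

theorem X_sq_sub_C_mul_X_add_C_eq_mul {R : Type*} [CommRing R] (c T s : R) :
    X ^ 2 - C (2 * c * T) * X + C (c ^ 2 * (T ^ 2 - s ^ 2))
      = (X - C (c * (T + s))) * (X - C (c * (T - s))) := by
  simp only [C_mul, C_add, C_sub, C_pow, C_ofNat]
  ring

theorem charpoly_jacobian_L1rhs_equilibrium {a₁ a₂ b₁ b₂ d₁ d₂ k ρ x y c T Δ m : ℝ}
    (ha₁ : a₁ ≠ 0) (hb₁ : b₁ ≠ 0) (hk : k ≠ 0) (hne : a₁ ≠ d₁)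
    (hden : b₁ ^ 2 * d₁ - b₂ * (a₁ - d₁) ^ 2 * k + b₁ * (-a₁ + d₁) * k * ρ ≠ 0)
    (hx : x = b₁ * d₁ / (a₁ - d₁))
    (hy : y = -(b₁ * (b₁ * d₁ + (d₁ - a₁) * k * ρ)) / ((a₁ - d₁) ^ 2 * k))
    (hc : c = 1 / (2 * a₁ * (a₁ - d₁) * k))
    (hT : T = -(a₁ * b₁ * d₁) - b₁ * d₁ ^ 2 + a₁ * d₁ * k * ρ - d₁ ^ 2 * k * ρ)
    (hΔ : Δ = d₁ * (-4 * a₁ * (a₁ - d₁) ^ 2 * k * (-(b₁ * d₁) + (a₁ - d₁) * k * ρ) +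
            d₁ * (a₁ * (b₁ - k * ρ) + d₁ * (b₁ + k * ρ)) ^ 2))
    (hm : m = -d₂ + a₂ * b₁ * (b₁ * d₁ + (-a₁ + d₁) * k * ρ) /
            (b₁ ^ 2 * d₁ - b₂ * (a₁ - d₁) ^ 2 * k + b₁ * (-a₁ + d₁) * k * ρ)) :
    (jacobian (L1rhs a₁ a₂ b₁ b₂ d₁ d₂ k ρ) ![x, y, 0]).charpoly
      = (X - C m) * (X ^ 2 - C (2 * c * T) * X + C (c ^ 2 * (T ^ 2 - Δ))) := by
  have had : a₁ - d₁ ≠ 0 := sub_ne_zero.mpr hne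
  have hbx_eq : b₁ + x = a₁ * b₁ / (a₁ - d₁) := by
    rw [hx]; field_simp; ring
  have hby_eq : b₂ + y = -(b₁ ^ 2 * d₁ - b₂ * (a₁ - d₁) ^ 2 * k + b₁ * (-a₁ + d₁) * k * ρ) /
      ((a₁ - d₁) ^ 2 * k) := by
    rw [hy]; field_simp; ring
  have hbx : b₁ + x ≠ 0 := by rw [hbx_eq]; exact div_ne_zero (mul_ne_zero ha₁ hb₁) had
  have hby : b₂ + y ≠ 0 := by
    rw [hby_eq]
    exact div_ne_zero (neg_ne_zero.mpr hden) (mul_ne_zero (pow_ne_zero 2 had) hk)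
  rw [jacobian_L1rhs hbx hby]
  simp only [mul_zero, zero_mul, zero_div, sub_zero, add_zero]
  rw [Matrix.charpoly_fin_three_of_bottom_row]
  have hpred : a₂ * y / (b₂ + y) - d₂ = m := by
    rw [hm, hby_eq, hy]
    field_simp
    ring
  have htrace : ρ - x / k - a₁ * y / (b₁ + x) + x * (-(1 / k) + a₁ * y / (b₁ + x) ^ 2)
      + (a₁ * x / (b₁ + x) - d₁) = 2 * c * T := by
    rw [hbx_eq, hc, hT, hx, hy]
    field_simp
    ring
  have hdet : (ρ - x / k - a₁ * y / (b₁ + x) + x * (-(1 / k) + a₁ * y / (b₁ + x) ^ 2))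
      * (a₁ * x / (b₁ + x) - d₁) - -(x * (a₁ / (b₁ + x))) * (y * (a₁ * b₁ / (b₁ + x) ^ 2))
      = c ^ 2 * (T ^ 2 - Δ) := by
    rw [hbx_eq, hc, hT, hΔ, hx, hy]
    field_simp
    ring
  rw [hpred, htrace, hdet]

theorem stmt_8_general (a₁ a₂ b₁ b₂ d₁ d₂ k ρ : ℝ)
    (ha₁ : 0 < a₁) (hb₁ : 0 < b₁)
    (hk : 0 < k)
    (hne : a₁ ≠ d₁)
    (hden₃ : b₁ ^ 2 * d₁ - b₂ * (a₁ - d₁) ^ 2 * k + b₁ * (-a₁ + d₁) * k * ρ ≠ 0)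
    (Δ : ℝ)
    (hΔ : Δ = d₁ * (-4 * a₁ * (a₁ - d₁) ^ 2 * k * (-(b₁ * d₁) + (a₁ - d₁) * k * ρ) +
            d₁ * (a₁ * (b₁ - k * ρ) + d₁ * (b₁ + k * ρ)) ^ 2))
    (s : ℂ) (hs : s ^ 2 = (Δ : ℂ))
    (μ : ℂ)
    (hμ : μ = -(d₂ : ℂ) + (a₂ * b₁ * (b₁ * d₁ + (-a₁ + d₁) * k * ρ) : ℝ) /
            ((b₁ ^ 2 * d₁ - b₂ * (a₁ - d₁) ^ 2 * k + b₁ * (-a₁ + d₁) * k * ρ : ℝ) : ℂ))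
    (lamP lamM : ℂ)
    (hlamP : lamP = (1 / (2 * a₁ * (a₁ - d₁) * k) : ℝ) *
            (((-(a₁ * b₁ * d₁) - b₁ * d₁ ^ 2 + a₁ * d₁ * k * ρ - d₁ ^ 2 * k * ρ : ℝ) : ℂ) + s))
    (hlamM : lamM = (1 / (2 * a₁ * (a₁ - d₁) * k) : ℝ) *
            (((-(a₁ * b₁ * d₁) - b₁ * d₁ ^ 2 + a₁ * d₁ * k * ρ - d₁ ^ 2 * k * ρ : ℝ) : ℂ) - s)) :
    ((jacobian (L1rhs a₁ a₂ b₁ b₂ d₁ d₂ k ρ)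
        ![b₁ * d₁ / (a₁ - d₁),
          -(b₁ * (b₁ * d₁ + (d₁ - a₁) * k * ρ)) / ((a₁ - d₁) ^ 2 * k),
          0]).map (algebraMap ℝ ℂ)).charpoly
      = (X - C μ) * (X - C lamP) * (X - C lamM) := by
  rw [Matrix.charpoly_map, charpoly_jacobian_L1rhs_equilibrium ha₁.ne' hb₁.ne' hk.ne' hne hden₃
    rfl rfl rfl rfl hΔ rfl, hlamP, hlamM, mul_assoc (X - C μ), ← X_sq_sub_C_mul_X_add_C_eq_mul,
    hs, hμ]
  simp only [Polynomial.map_mul, Polynomial.map_sub, Polynomial.map_add, Polynomial.map_pow, map_X,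
    map_C, Complex.coe_algebraMap]
  push_cast
  ring

/-- The characteristic polynomial (over ℂ) of the Jacobian of (L1) at the
equilibrium `p₃` factors as `(t − μ)(t − λ₊)(t − λ₋)`, where `λ±` are given by the
quadratic formula with any complex square root `s` of the discriminant `Δ`. -/
theorem stmt_8 (a₁ a₂ b₁ b₂ d₁ d₂ k ρ : ℝ)
    (ha₁ : 0 < a₁) (ha₂ : 0 < a₂) (hb₁ : 0 < b₁) (hb₂ : 0 < b₂)
    (hd₁ : 0 < d₁) (hd₂ : 0 < d₂) (hk : 0 < k) (hρ : 0 < ρ)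
    (hne : a₁ ≠ d₁)
    (hden₁ : b₁ + b₁ * d₁ / (a₁ - d₁) ≠ 0)
    (hden₂ : b₂ - b₁ * (b₁ * d₁ + (d₁ - a₁) * k * ρ) / ((a₁ - d₁) ^ 2 * k) ≠ 0)
    (hden₃ : b₁ ^ 2 * d₁ - b₂ * (a₁ - d₁) ^ 2 * k + b₁ * (-a₁ + d₁) * k * ρ ≠ 0)
    (Δ : ℝ)
    (hΔ : Δ = d₁ * (-4 * a₁ * (a₁ - d₁) ^ 2 * k * (-(b₁ * d₁) + (a₁ - d₁) * k * ρ) +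
            d₁ * (a₁ * (b₁ - k * ρ) + d₁ * (b₁ + k * ρ)) ^ 2))
    (s : ℂ) (hs : s ^ 2 = (Δ : ℂ))
    (μ : ℂ)
    (hμ : μ = -(d₂ : ℂ) + (a₂ * b₁ * (b₁ * d₁ + (-a₁ + d₁) * k * ρ) : ℝ) /
            ((b₁ ^ 2 * d₁ - b₂ * (a₁ - d₁) ^ 2 * k + b₁ * (-a₁ + d₁) * k * ρ : ℝ) : ℂ))
    (lamP lamM : ℂ)
    (hlamP : lamP = (1 / (2 * a₁ * (a₁ - d₁) * k) : ℝ) *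
            (((-(a₁ * b₁ * d₁) - b₁ * d₁ ^ 2 + a₁ * d₁ * k * ρ - d₁ ^ 2 * k * ρ : ℝ) : ℂ) + s))
    (hlamM : lamM = (1 / (2 * a₁ * (a₁ - d₁) * k) : ℝ) *
            (((-(a₁ * b₁ * d₁) - b₁ * d₁ ^ 2 + a₁ * d₁ * k * ρ - d₁ ^ 2 * k * ρ : ℝ) : ℂ) - s)) :
    ((jacobian (L1rhs a₁ a₂ b₁ b₂ d₁ d₂ k ρ)
        ![b₁ * d₁ / (a₁ - d₁),
          -(b₁ * (b₁ * d₁ + (d₁ - a₁) * k * ρ)) / ((a₁ - d₁) ^ 2 * k),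
          0]).map (algebraMap ℝ ℂ)).charpoly
      = (X - C μ) * (X - C lamP) * (X - C lamM) :=
  stmt_8_general a₁ a₂ b₁ b₂ d₁ d₂ k ρ ha₁ hb₁ hk hne hden₃ Δ hΔ s hs μ hμ lamP lamM hlamP hlamM
end

section
/- Let a₁, a₂, b₁, b₂, d₁ be strictly positive reals with a₁ > d₁ and a₁b₁ − 2b₂d₁ > 0, and let l, m be reals. If R₁ = a₁l/((a₁−d₁)d₁) > 0, then the pair (r₁, w₁) with r₁ = 2b₁√R₁ and w₁ = 0 satisfies F₂₀₁(r₁, w₁) = 0 and F₂₀₂(r₁, w₁) = 0. -/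
/-- If `R₁ = a₁l/((a₁−d₁)d₁) > 0`, then `(r₁, w₁) = (2b₁√R₁, 0)` is a common zero of the
second-order averaged functions `F₂₀₁` and `F₂₀₂`. -/
theorem stmt_13 (a₁ a₂ b₁ b₂ d₁ l m : ℝ)
    (ha₁ : 0 < a₁) (ha₂ : 0 < a₂) (hb₁ : 0 < b₁) (hb₂ : 0 < b₂) (hd₁ : 0 < d₁)
    (hne : d₁ < a₁) (hpos : 0 < a₁ * b₁ - 2 * b₂ * d₁)
    (Q : ℝ) (hQ : Q = Real.sqrt (a₁ * b₁ / ((a₁ - d₁) ^ 2 * (a₁ * b₁ - 2 * b₂ * d₁))))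
    (F₂₀₁ F₂₀₂ : ℝ → ℝ → ℝ)
    (hF₂₀₁ : ∀ r w, F₂₀₁ r w = Q * r / (2 * Real.sqrt 2 * a₁ ^ 4 * b₁ ^ 4 * d₁) *
        (2 * (a₁ - d₁) ^ 2 * (a₁ * b₁ - 2 * b₂ * d₁) *
            (b₁ * a₁ ^ 3 - b₁ * d₁ * a₁ ^ 2 - 4 * a₂ * b₂ * d₁ ^ 2) * w ^ 2 -
          a₁ ^ 3 * b₁ ^ 2 * d₁ * (4 * a₁ * l * b₁ ^ 2 + d₁ * (d₁ - a₁) * r ^ 2)))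
    (hF₂₀₂ : ∀ r w, F₂₀₂ r w = -(Real.sqrt 2 / (a₁ ^ 5 * b₁ ^ 5)) * (a₁ - d₁) ^ 2 *
        (a₁ * b₁ - 2 * b₂ * d₁) * Q ^ 3 * w *
        (a₁ ^ 4 * m * b₁ ^ 4 - 6 * a₁ * a₂ * b₂ * d₁ ^ 3 * r ^ 2 * b₁ -
          2 * a₂ * b₂ * (a₁ - d₁) ^ 2 * d₁ * (a₁ * b₁ - 2 * b₂ * d₁) * w ^ 2))
    (R₁ : ℝ) (hR₁ : R₁ = a₁ * l / ((a₁ - d₁) * d₁)) (hR₁pos : 0 < R₁)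
    (r₁ w₁ : ℝ) (hr₁ : r₁ = 2 * b₁ * Real.sqrt R₁) (hw₁ : w₁ = 0) :
    F₂₀₁ r₁ w₁ = 0 ∧ F₂₀₂ r₁ w₁ = 0 := by
  have hsq : Real.sqrt R₁ ^ 2 = R₁ := Real.sq_sqrt hR₁pos.le
  have hd : (0:ℝ) < a₁ - d₁ := sub_pos.mpr hne
  have hden : (a₁ - d₁) * d₁ ≠ 0 := by positivity
  constructor
  · rw [hF₂₀₁, hw₁, hr₁]
    have : 4 * a₁ * l * b₁ ^ 2 + d₁ * (d₁ - a₁) * (2 * b₁ * Real.sqrt R₁) ^ 2 = 0 := by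
      have h : (2 * b₁ * Real.sqrt R₁) ^ 2 = 4 * b₁ ^ 2 * R₁ := by rw [mul_pow, hsq]; ring
      rw [h, hR₁]; field_simp; ring
    rw [this]; ring
  · rw [hF₂₀₂, hw₁]; ring
end

section
/- Let a₁, a₂, b₁, b₂, d₁ be strictly positive reals with a₁ > d₁ and a₁b₁ − 2b₂d₁ > 0, and let l, m be reals. Define R₂ = a₁b₁(a₁²b₁(a₁−d₁)m − 4a₂b₂d₁²(l+m))/(a₂b₂d₁(5b₁a₁³ − 5b₁d₁a₁² − 24a₂b₂d₁²)) and W₂ = (24a₂b₂d₁²l − a₁²b₁(a₁−d₁)m)/(a₂b₂(a₁−d₁)²d₁(2b₂d₁−a₁b₁)(−5b₁a₁³ + 5b₁d₁a₁² + 24a₂b₂d₁²)). If R₂ > 0 and W₂ > 0 (and the denominators above are nonzero), then both pairs (r₂, w₂) and (r₂, −w₂), with r₂ = (a₁b₁/d₁)√R₂ and w₂ = (a₁²b₁²/√2)√W₂, satisfy F₂₀₁ = 0 and F₂₀₂ = 0. -/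
/-!
Both averaged functions are a prefactor times a bracket that depends on `(r, w)` only through
`r²` and `w²`, and is affine in them. Writing `r² = (a₁b₁/d₁)² R` and `w² = a₁⁴b₁⁴ W / 2`,
the vanishing of the two brackets becomes a 2×2 linear system in `(R, W)`, of determinant
`-a₂b₂d₁(a₁-d₁)²(a₁b₁-2b₂d₁)(5a₁²b₁(a₁-d₁) - 24a₂b₂d₁²)`, and `(R₂, W₂)` is its Cramer solution.
Since only `w²` enters, `(r₂, -w₂)` is a zero as well.
-/

theorem solve_two_by_two_of_cramer {K : Type*} [Field K] {p q u s e f x y : K}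
    (hdet : p * s - q * u ≠ 0) (hx : x * (p * s - q * u) = e * s - q * f)
    (hy : y * (p * s - q * u) = p * f - e * u) :
    p * x + q * y = e ∧ u * x + s * y = f :=
  ⟨mul_right_cancel₀ hdet (by linear_combination p * hx + q * hy),
    mul_right_cancel₀ hdet (by linear_combination u * hx + s * hy)⟩

theorem amplitudes_solve_linear_system {a₁ a₂ b₁ b₂ d₁ l m R₂ W₂ : ℝ}
    (hR₂ : R₂ = a₁ * b₁ * (a₁ ^ 2 * b₁ * (a₁ - d₁) * m - 4 * a₂ * b₂ * d₁ ^ 2 * (l + m)) /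
        (a₂ * b₂ * d₁ * (5 * b₁ * a₁ ^ 3 - 5 * b₁ * d₁ * a₁ ^ 2 - 24 * a₂ * b₂ * d₁ ^ 2)))
    (hW₂ : W₂ = (24 * a₂ * b₂ * d₁ ^ 2 * l - a₁ ^ 2 * b₁ * (a₁ - d₁) * m) /
        (a₂ * b₂ * (a₁ - d₁) ^ 2 * d₁ * (2 * b₂ * d₁ - a₁ * b₁) *
          (-(5 * b₁ * a₁ ^ 3) + 5 * b₁ * d₁ * a₁ ^ 2 + 24 * a₂ * b₂ * d₁ ^ 2)))
    (hden₁ : a₂ * b₂ * d₁ * (5 * b₁ * a₁ ^ 3 - 5 * b₁ * d₁ * a₁ ^ 2 - 24 * a₂ * b₂ * d₁ ^ 2) ≠ 0)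
    (hden₂ : a₂ * b₂ * (a₁ - d₁) ^ 2 * d₁ * (2 * b₂ * d₁ - a₁ * b₁) *
        (-(5 * b₁ * a₁ ^ 3) + 5 * b₁ * d₁ * a₁ ^ 2 + 24 * a₂ * b₂ * d₁ ^ 2) ≠ 0) :
    a₁ * (a₁ - d₁) * R₂ + (a₁ - d₁) ^ 2 * (a₁ * b₁ - 2 * b₂ * d₁) *
        (a₁ ^ 2 * b₁ * (a₁ - d₁) - 4 * a₂ * b₂ * d₁ ^ 2) * W₂ = 4 * d₁ * l ∧
      6 * a₂ * b₂ * d₁ * R₂ + a₁ * b₁ * a₂ * b₂ * d₁ * (a₁ - d₁) ^ 2 *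
        (a₁ * b₁ - 2 * b₂ * d₁) * W₂ = a₁ * b₁ * m := by
  have hR₂' := div_mul_cancel₀ (a₁ * b₁ * (a₁ ^ 2 * b₁ * (a₁ - d₁) * m -
    4 * a₂ * b₂ * d₁ ^ 2 * (l + m))) hden₁
  have hW₂' := div_mul_cancel₀ (24 * a₂ * b₂ * d₁ ^ 2 * l - a₁ ^ 2 * b₁ * (a₁ - d₁) * m) hden₂
  rw [← hR₂] at hR₂'
  rw [← hW₂] at hW₂'
  refine solve_two_by_two_of_cramer (fun h => hden₂ (by linear_combination -h)) ?_ ?_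
  · linear_combination -(a₁ - d₁) ^ 2 * (a₁ * b₁ - 2 * b₂ * d₁) * hR₂'
  · linear_combination -hW₂'

theorem stmt_14_general (a₁ a₂ b₁ b₂ d₁ l m : ℝ)
    (hd₁ : 0 < d₁)
    (Q : ℝ)
    (F₂₀₁ F₂₀₂ : ℝ → ℝ → ℝ)
    (hF₂₀₁ : ∀ r w, F₂₀₁ r w = Q * r / (2 * Real.sqrt 2 * a₁ ^ 4 * b₁ ^ 4 * d₁) *
        (2 * (a₁ - d₁) ^ 2 * (a₁ * b₁ - 2 * b₂ * d₁) *
            (b₁ * a₁ ^ 3 - b₁ * d₁ * a₁ ^ 2 - 4 * a₂ * b₂ * d₁ ^ 2) * w ^ 2 -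
          a₁ ^ 3 * b₁ ^ 2 * d₁ * (4 * a₁ * l * b₁ ^ 2 + d₁ * (d₁ - a₁) * r ^ 2)))
    (hF₂₀₂ : ∀ r w, F₂₀₂ r w = -(Real.sqrt 2 / (a₁ ^ 5 * b₁ ^ 5)) * (a₁ - d₁) ^ 2 *
        (a₁ * b₁ - 2 * b₂ * d₁) * Q ^ 3 * w *
        (a₁ ^ 4 * m * b₁ ^ 4 - 6 * a₁ * a₂ * b₂ * d₁ ^ 3 * r ^ 2 * b₁ -
          2 * a₂ * b₂ * (a₁ - d₁) ^ 2 * d₁ * (a₁ * b₁ - 2 * b₂ * d₁) * w ^ 2))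
    (R₂ W₂ : ℝ)
    (hR₂ : R₂ = a₁ * b₁ * (a₁ ^ 2 * b₁ * (a₁ - d₁) * m - 4 * a₂ * b₂ * d₁ ^ 2 * (l + m)) /
        (a₂ * b₂ * d₁ * (5 * b₁ * a₁ ^ 3 - 5 * b₁ * d₁ * a₁ ^ 2 - 24 * a₂ * b₂ * d₁ ^ 2)))
    (hW₂ : W₂ = (24 * a₂ * b₂ * d₁ ^ 2 * l - a₁ ^ 2 * b₁ * (a₁ - d₁) * m) /
        (a₂ * b₂ * (a₁ - d₁) ^ 2 * d₁ * (2 * b₂ * d₁ - a₁ * b₁) *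
          (-(5 * b₁ * a₁ ^ 3) + 5 * b₁ * d₁ * a₁ ^ 2 + 24 * a₂ * b₂ * d₁ ^ 2)))
    (hR₂pos : 0 < R₂) (hW₂pos : 0 < W₂)
    (hden₁ : a₂ * b₂ * d₁ * (5 * b₁ * a₁ ^ 3 - 5 * b₁ * d₁ * a₁ ^ 2 - 24 * a₂ * b₂ * d₁ ^ 2) ≠ 0)
    (hden₂ : a₂ * b₂ * (a₁ - d₁) ^ 2 * d₁ * (2 * b₂ * d₁ - a₁ * b₁) *
        (-(5 * b₁ * a₁ ^ 3) + 5 * b₁ * d₁ * a₁ ^ 2 + 24 * a₂ * b₂ * d₁ ^ 2) ≠ 0)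
    (r₂ w₂ : ℝ) (hr₂ : r₂ = a₁ * b₁ / d₁ * Real.sqrt R₂)
    (hw₂ : w₂ = a₁ ^ 2 * b₁ ^ 2 / Real.sqrt 2 * Real.sqrt W₂) :
    (F₂₀₁ r₂ w₂ = 0 ∧ F₂₀₂ r₂ w₂ = 0) ∧ (F₂₀₁ r₂ (-w₂) = 0 ∧ F₂₀₂ r₂ (-w₂) = 0) := by
  have hr₂sq : (d₁ * r₂) ^ 2 = a₁ ^ 2 * b₁ ^ 2 * R₂ := by
    rw [hr₂, ← mul_assoc, mul_div_cancel₀ _ hd₁.ne', mul_pow, Real.sq_sqrt hR₂pos.le, mul_pow]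
  have hw₂sq : w₂ ^ 2 = a₁ ^ 4 * b₁ ^ 4 / 2 * W₂ := by
    rw [hw₂, mul_pow, div_pow, Real.sq_sqrt hW₂pos.le, Real.sq_sqrt zero_le_two]
    ring
  obtain ⟨hE₁, hE₂⟩ := amplitudes_solve_linear_system hR₂ hW₂ hden₁ hden₂
  have hbracket₁ : 2 * (a₁ - d₁) ^ 2 * (a₁ * b₁ - 2 * b₂ * d₁) *
      (b₁ * a₁ ^ 3 - b₁ * d₁ * a₁ ^ 2 - 4 * a₂ * b₂ * d₁ ^ 2) * w₂ ^ 2 -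
      a₁ ^ 3 * b₁ ^ 2 * d₁ * (4 * a₁ * l * b₁ ^ 2 + d₁ * (d₁ - a₁) * r₂ ^ 2) = 0 := by
    linear_combination a₁ ^ 3 * b₁ ^ 2 * (a₁ - d₁) * hr₂sq + 2 * (a₁ - d₁) ^ 2 *
      (a₁ * b₁ - 2 * b₂ * d₁) * (a₁ ^ 2 * b₁ * (a₁ - d₁) - 4 * a₂ * b₂ * d₁ ^ 2) * hw₂sq +
      a₁ ^ 4 * b₁ ^ 4 * hE₁
  have hbracket₂ : a₁ ^ 4 * m * b₁ ^ 4 - 6 * a₁ * a₂ * b₂ * d₁ ^ 3 * r₂ ^ 2 * b₁ -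
      2 * a₂ * b₂ * (a₁ - d₁) ^ 2 * d₁ * (a₁ * b₁ - 2 * b₂ * d₁) * w₂ ^ 2 = 0 := by
    linear_combination -6 * a₁ * a₂ * b₂ * d₁ * b₁ * hr₂sq - 2 * a₂ * b₂ * (a₁ - d₁) ^ 2 * d₁ *
      (a₁ * b₁ - 2 * b₂ * d₁) * hw₂sq - a₁ ^ 3 * b₁ ^ 3 * hE₂
  refine ⟨⟨?_, ?_⟩, ?_, ?_⟩
  · rw [hF₂₀₁, hbracket₁, mul_zero]
  · rw [hF₂₀₂, hbracket₂, mul_zero]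
  · rw [hF₂₀₁, neg_sq, hbracket₁, mul_zero]
  · rw [hF₂₀₂, neg_sq, hbracket₂, mul_zero]

/-- If `R₂ > 0` and `W₂ > 0`, then both `(r₂, w₂)` and `(r₂, −w₂)` are common zeros of
the second-order averaged functions `F₂₀₁` and `F₂₀₂`. -/
theorem stmt_14 (a₁ a₂ b₁ b₂ d₁ l m : ℝ)
    (ha₁ : 0 < a₁) (ha₂ : 0 < a₂) (hb₁ : 0 < b₁) (hb₂ : 0 < b₂) (hd₁ : 0 < d₁)
    (hne : d₁ < a₁) (hpos : 0 < a₁ * b₁ - 2 * b₂ * d₁)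
    (Q : ℝ) (hQ : Q = Real.sqrt (a₁ * b₁ / ((a₁ - d₁) ^ 2 * (a₁ * b₁ - 2 * b₂ * d₁))))
    (F₂₀₁ F₂₀₂ : ℝ → ℝ → ℝ)
    (hF₂₀₁ : ∀ r w, F₂₀₁ r w = Q * r / (2 * Real.sqrt 2 * a₁ ^ 4 * b₁ ^ 4 * d₁) *
        (2 * (a₁ - d₁) ^ 2 * (a₁ * b₁ - 2 * b₂ * d₁) *
            (b₁ * a₁ ^ 3 - b₁ * d₁ * a₁ ^ 2 - 4 * a₂ * b₂ * d₁ ^ 2) * w ^ 2 -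
          a₁ ^ 3 * b₁ ^ 2 * d₁ * (4 * a₁ * l * b₁ ^ 2 + d₁ * (d₁ - a₁) * r ^ 2)))
    (hF₂₀₂ : ∀ r w, F₂₀₂ r w = -(Real.sqrt 2 / (a₁ ^ 5 * b₁ ^ 5)) * (a₁ - d₁) ^ 2 *
        (a₁ * b₁ - 2 * b₂ * d₁) * Q ^ 3 * w *
        (a₁ ^ 4 * m * b₁ ^ 4 - 6 * a₁ * a₂ * b₂ * d₁ ^ 3 * r ^ 2 * b₁ -
          2 * a₂ * b₂ * (a₁ - d₁) ^ 2 * d₁ * (a₁ * b₁ - 2 * b₂ * d₁) * w ^ 2))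
    (R₂ W₂ : ℝ)
    (hR₂ : R₂ = a₁ * b₁ * (a₁ ^ 2 * b₁ * (a₁ - d₁) * m - 4 * a₂ * b₂ * d₁ ^ 2 * (l + m)) /
        (a₂ * b₂ * d₁ * (5 * b₁ * a₁ ^ 3 - 5 * b₁ * d₁ * a₁ ^ 2 - 24 * a₂ * b₂ * d₁ ^ 2)))
    (hW₂ : W₂ = (24 * a₂ * b₂ * d₁ ^ 2 * l - a₁ ^ 2 * b₁ * (a₁ - d₁) * m) /
        (a₂ * b₂ * (a₁ - d₁) ^ 2 * d₁ * (2 * b₂ * d₁ - a₁ * b₁) *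
          (-(5 * b₁ * a₁ ^ 3) + 5 * b₁ * d₁ * a₁ ^ 2 + 24 * a₂ * b₂ * d₁ ^ 2)))
    (hR₂pos : 0 < R₂) (hW₂pos : 0 < W₂)
    (hden₁ : a₂ * b₂ * d₁ * (5 * b₁ * a₁ ^ 3 - 5 * b₁ * d₁ * a₁ ^ 2 - 24 * a₂ * b₂ * d₁ ^ 2) ≠ 0)
    (hden₂ : a₂ * b₂ * (a₁ - d₁) ^ 2 * d₁ * (2 * b₂ * d₁ - a₁ * b₁) *
        (-(5 * b₁ * a₁ ^ 3) + 5 * b₁ * d₁ * a₁ ^ 2 + 24 * a₂ * b₂ * d₁ ^ 2) ≠ 0)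
    (r₂ w₂ : ℝ) (hr₂ : r₂ = a₁ * b₁ / d₁ * Real.sqrt R₂)
    (hw₂ : w₂ = a₁ ^ 2 * b₁ ^ 2 / Real.sqrt 2 * Real.sqrt W₂) :
    (F₂₀₁ r₂ w₂ = 0 ∧ F₂₀₂ r₂ w₂ = 0) ∧ (F₂₀₁ r₂ (-w₂) = 0 ∧ F₂₀₂ r₂ (-w₂) = 0) :=
  stmt_14_general a₁ a₂ b₁ b₂ d₁ l m hd₁ Q F₂₀₁ F₂₀₂ hF₂₀₁ hF₂₀₂ R₂ W₂ hR₂ hW₂ hR₂pos hW₂pos hden₁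
    hden₂ r₂ w₂ hr₂ hw₂
end

section
/- Let a₁, a₂, b₁, b₂, d₁ be strictly positive reals with a₁ > d₁ and a₁b₁ − 2b₂d₁ > 0, and let l, m be reals. Then the set of pairs (r, w) ∈ ℝ² with r > 0 satisfying F₂₀₁(r, w) = 0 and F₂₀₂(r, w) = 0 has at most 3 elements, namely it is contained in { (r₁, 0), (r₂, w₂), (r₂, −w₂) } where r₁ = 2b₁√(a₁l/((a₁−d₁)d₁)), r₂ = (a₁b₁/d₁)√( a₁b₁(a₁²b₁(a₁−d₁)m − 4a₂b₂d₁²(l+m))/(a₂b₂d₁(5b₁a₁³ − 5b₁d₁a₁² − 24a₂b₂d₁²)) ), and w₂ = (a₁²b₁²/√2)√( (24a₂b₂d₁²l − a₁²b₁(a₁−d₁)m)/(a₂b₂(a₁−d₁)²d₁(2b₂d₁−a₁b₁)(−5b₁a₁³ + 5b₁d₁a₁² + 24a₂b₂d₁²)) ), provided the denominators appearing are nonzero. -/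
/-- The zeros `(r, w)` with `r > 0` of the second-order averaged system
`F₂₀₁ = F₂₀₂ = 0` form a set with at most 3 elements: it is contained in
`{(r₁, 0), (r₂, w₂), (r₂, −w₂)}`. -/
theorem stmt_15 (a₁ a₂ b₁ b₂ d₁ l m : ℝ)
    (ha₁ : 0 < a₁) (ha₂ : 0 < a₂) (hb₁ : 0 < b₁) (hb₂ : 0 < b₂) (hd₁ : 0 < d₁)
    (hne : d₁ < a₁) (hpos : 0 < a₁ * b₁ - 2 * b₂ * d₁)
    (Q : ℝ) (hQ : Q = Real.sqrt (a₁ * b₁ / ((a₁ - d₁) ^ 2 * (a₁ * b₁ - 2 * b₂ * d₁))))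
    (F₂₀₁ F₂₀₂ : ℝ → ℝ → ℝ)
    (hF₂₀₁ : ∀ r w, F₂₀₁ r w = Q * r / (2 * Real.sqrt 2 * a₁ ^ 4 * b₁ ^ 4 * d₁) *
        (2 * (a₁ - d₁) ^ 2 * (a₁ * b₁ - 2 * b₂ * d₁) *
            (b₁ * a₁ ^ 3 - b₁ * d₁ * a₁ ^ 2 - 4 * a₂ * b₂ * d₁ ^ 2) * w ^ 2 -
          a₁ ^ 3 * b₁ ^ 2 * d₁ * (4 * a₁ * l * b₁ ^ 2 + d₁ * (d₁ - a₁) * r ^ 2)))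
    (hF₂₀₂ : ∀ r w, F₂₀₂ r w = -(Real.sqrt 2 / (a₁ ^ 5 * b₁ ^ 5)) * (a₁ - d₁) ^ 2 *
        (a₁ * b₁ - 2 * b₂ * d₁) * Q ^ 3 * w *
        (a₁ ^ 4 * m * b₁ ^ 4 - 6 * a₁ * a₂ * b₂ * d₁ ^ 3 * r ^ 2 * b₁ -
          2 * a₂ * b₂ * (a₁ - d₁) ^ 2 * d₁ * (a₁ * b₁ - 2 * b₂ * d₁) * w ^ 2))
    (hden₁ : a₂ * b₂ * d₁ * (5 * b₁ * a₁ ^ 3 - 5 * b₁ * d₁ * a₁ ^ 2 - 24 * a₂ * b₂ * d₁ ^ 2) ≠ 0)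
    (hden₂ : a₂ * b₂ * (a₁ - d₁) ^ 2 * d₁ * (2 * b₂ * d₁ - a₁ * b₁) *
        (-(5 * b₁ * a₁ ^ 3) + 5 * b₁ * d₁ * a₁ ^ 2 + 24 * a₂ * b₂ * d₁ ^ 2) ≠ 0)
    (r₁ r₂ w₂ : ℝ)
    (hr₁ : r₁ = 2 * b₁ * Real.sqrt (a₁ * l / ((a₁ - d₁) * d₁)))
    (hr₂ : r₂ = a₁ * b₁ / d₁ * Real.sqrt
        (a₁ * b₁ * (a₁ ^ 2 * b₁ * (a₁ - d₁) * m - 4 * a₂ * b₂ * d₁ ^ 2 * (l + m)) /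
          (a₂ * b₂ * d₁ * (5 * b₁ * a₁ ^ 3 - 5 * b₁ * d₁ * a₁ ^ 2 - 24 * a₂ * b₂ * d₁ ^ 2))))
    (hw₂ : w₂ = a₁ ^ 2 * b₁ ^ 2 / Real.sqrt 2 * Real.sqrt
        ((24 * a₂ * b₂ * d₁ ^ 2 * l - a₁ ^ 2 * b₁ * (a₁ - d₁) * m) /
          (a₂ * b₂ * (a₁ - d₁) ^ 2 * d₁ * (2 * b₂ * d₁ - a₁ * b₁) *
            (-(5 * b₁ * a₁ ^ 3) + 5 * b₁ * d₁ * a₁ ^ 2 + 24 * a₂ * b₂ * d₁ ^ 2)))) :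
    {p : ℝ × ℝ | 0 < p.1 ∧ F₂₀₁ p.1 p.2 = 0 ∧ F₂₀₂ p.1 p.2 = 0} ⊆
      {(r₁, 0), (r₂, w₂), (r₂, -w₂)} := by
  rintro ⟨r, w⟩ ⟨hr, h1, h2⟩
  simp only [Set.mem_setOf_eq] at hr h1 h2 ⊢
  have had : (0:ℝ) < a₁ - d₁ := sub_pos.2 hne
  have hQpos : 0 < Q := by
    rw [hQ]
    exact Real.sqrt_pos.2 (div_pos (mul_pos ha₁ hb₁)
      (mul_pos (pow_pos had 2) hpos))
  have hs2 : (0:ℝ) < Real.sqrt 2 := by positivity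
  rw [hF₂₀₁] at h1
  have hc1 : Q * r / (2 * Real.sqrt 2 * a₁ ^ 4 * b₁ ^ 4 * d₁) ≠ 0 := by
    apply div_ne_zero (mul_ne_zero hQpos.ne' hr.ne')
    positivity
  have e1 : 2 * (a₁ - d₁) ^ 2 * (a₁ * b₁ - 2 * b₂ * d₁) *
      (b₁ * a₁ ^ 3 - b₁ * d₁ * a₁ ^ 2 - 4 * a₂ * b₂ * d₁ ^ 2) * w ^ 2 -
      a₁ ^ 3 * b₁ ^ 2 * d₁ * (4 * a₁ * l * b₁ ^ 2 + d₁ * (d₁ - a₁) * r ^ 2) = 0 :=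
    (mul_eq_zero.1 h1).resolve_left hc1
  by_cases hw : w = 0
  · -- case w = 0 : point (r₁, 0)
    subst hw
    have key : a₁ * l / ((a₁ - d₁) * d₁) = (r / (2 * b₁)) ^ 2 := by
      rw [div_pow, div_eq_div_iff (by positivity) (by positivity)]
      have hc : a₁ ^ 3 * b₁ ^ 2 * d₁ ≠ 0 := by positivity
      have e1' : 4 * a₁ * l * b₁ ^ 2 + d₁ * (d₁ - a₁) * r ^ 2 = 0 := by
        rcases mul_eq_zero.1 (show a₁ ^ 3 * b₁ ^ 2 * d₁ *
            (4 * a₁ * l * b₁ ^ 2 + d₁ * (d₁ - a₁) * r ^ 2) = 0 by linarith [e1]) with h | h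
        · exact absurd h hc
        · exact h
      linear_combination e1'
    left
    have : r₁ = r := by
      rw [hr₁, key, Real.sqrt_sq (by positivity)]
      field_simp
    rw [this]
  · -- case w ≠ 0 : point (r₂, ±w₂)
    rw [hF₂₀₂] at h2
    have hc2 : -(Real.sqrt 2 / (a₁ ^ 5 * b₁ ^ 5)) * (a₁ - d₁) ^ 2 *
        (a₁ * b₁ - 2 * b₂ * d₁) * Q ^ 3 * w ≠ 0 := by
      refine mul_ne_zero (mul_ne_zero (mul_ne_zero (mul_ne_zero ?_ (by positivity))
        hpos.ne') (by positivity)) hw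
      exact neg_ne_zero.2 (by positivity)
    have e2 : a₁ ^ 4 * m * b₁ ^ 4 - 6 * a₁ * a₂ * b₂ * d₁ ^ 3 * r ^ 2 * b₁ -
        2 * a₂ * b₂ * (a₁ - d₁) ^ 2 * d₁ * (a₁ * b₁ - 2 * b₂ * d₁) * w ^ 2 = 0 :=
      (mul_eq_zero.1 h2).resolve_left hc2
    -- the r-equation
    have hab : a₁ * b₁ ≠ 0 := by positivity
    have hTr : a₁ * b₁ * (a₁ ^ 2 * b₁ * (a₁ - d₁) * m - 4 * a₂ * b₂ * d₁ ^ 2 * (l + m)) *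
        (a₁ * b₁) ^ 2 -
        a₂ * b₂ * d₁ * (5 * b₁ * a₁ ^ 3 - 5 * b₁ * d₁ * a₁ ^ 2 - 24 * a₂ * b₂ * d₁ ^ 2) *
        (d₁ * r) ^ 2 = 0 := by
      rcases mul_eq_zero.1 (show (a₁ * b₁) *
          (a₁ * b₁ * (a₁ ^ 2 * b₁ * (a₁ - d₁) * m - 4 * a₂ * b₂ * d₁ ^ 2 * (l + m)) *
            (a₁ * b₁) ^ 2 -
          a₂ * b₂ * d₁ * (5 * b₁ * a₁ ^ 3 - 5 * b₁ * d₁ * a₁ ^ 2 - 24 * a₂ * b₂ * d₁ ^ 2) *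
            (d₁ * r) ^ 2) = 0 by
        linear_combination (a₂ * b₂ * d₁) * e1 +
          (b₁ * a₁ ^ 3 - b₁ * d₁ * a₁ ^ 2 - 4 * a₂ * b₂ * d₁ ^ 2) * e2) with h | h
      · exact absurd h hab
      · exact h
    have hargr : a₁ * b₁ * (a₁ ^ 2 * b₁ * (a₁ - d₁) * m - 4 * a₂ * b₂ * d₁ ^ 2 * (l + m)) /
        (a₂ * b₂ * d₁ * (5 * b₁ * a₁ ^ 3 - 5 * b₁ * d₁ * a₁ ^ 2 - 24 * a₂ * b₂ * d₁ ^ 2)) =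
        (d₁ * r / (a₁ * b₁)) ^ 2 := by
      rw [div_pow, div_eq_div_iff hden₁ (by positivity)]
      linear_combination hTr
    have hrr : r₂ = r := by
      rw [hr₂, hargr, Real.sqrt_sq (by positivity)]
      field_simp
    -- the w-equation
    have hab2 : a₁ * b₁ * d₁ ^ 2 ≠ 0 := by positivity
    have hTw : (24 * a₂ * b₂ * d₁ ^ 2 * l - a₁ ^ 2 * b₁ * (a₁ - d₁) * m) *
        (a₁ ^ 2 * b₁ ^ 2) ^ 2 -
        a₂ * b₂ * (a₁ - d₁) ^ 2 * d₁ * (2 * b₂ * d₁ - a₁ * b₁) *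
          (-(5 * b₁ * a₁ ^ 3) + 5 * b₁ * d₁ * a₁ ^ 2 + 24 * a₂ * b₂ * d₁ ^ 2) *
        (2 * w ^ 2) = 0 := by
      rcases mul_eq_zero.1 (show (a₁ * b₁ * d₁ ^ 2) *
          ((24 * a₂ * b₂ * d₁ ^ 2 * l - a₁ ^ 2 * b₁ * (a₁ - d₁) * m) *
            (a₁ ^ 2 * b₁ ^ 2) ^ 2 -
          a₂ * b₂ * (a₁ - d₁) ^ 2 * d₁ * (2 * b₂ * d₁ - a₁ * b₁) *
            (-(5 * b₁ * a₁ ^ 3) + 5 * b₁ * d₁ * a₁ ^ 2 + 24 * a₂ * b₂ * d₁ ^ 2) *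
          (2 * w ^ 2)) = 0 by
        linear_combination (-(6 * a₁ * a₂ * b₂ * d₁ ^ 3 * b₁)) * e1 +
          (-(a₁ ^ 3 * b₁ ^ 2 * d₁ ^ 2 * (a₁ - d₁))) * e2) with h | h
      · exact absurd h hab2
      · exact h
    have hargw : (24 * a₂ * b₂ * d₁ ^ 2 * l - a₁ ^ 2 * b₁ * (a₁ - d₁) * m) /
        (a₂ * b₂ * (a₁ - d₁) ^ 2 * d₁ * (2 * b₂ * d₁ - a₁ * b₁) *
          (-(5 * b₁ * a₁ ^ 3) + 5 * b₁ * d₁ * a₁ ^ 2 + 24 * a₂ * b₂ * d₁ ^ 2)) =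
        (Real.sqrt 2 * w / (a₁ ^ 2 * b₁ ^ 2)) ^ 2 := by
      have hsq : (Real.sqrt 2 * w) ^ 2 = 2 * w ^ 2 := by
        rw [mul_pow, Real.sq_sqrt (by norm_num : (0:ℝ) ≤ 2)]
      rw [div_pow, div_eq_div_iff hden₂ (by positivity), hsq]
      linear_combination hTw
    have hww : w₂ = |w| := by
      rw [hw₂, hargw, Real.sqrt_sq_eq_abs, abs_div, abs_mul,
        abs_of_nonneg hs2.le, abs_of_pos (show (0:ℝ) < a₁ ^ 2 * b₁ ^ 2 by positivity)]
      field_simp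
    rcases abs_cases w with ⟨habs, _⟩ | ⟨habs, _⟩
    · right; left
      rw [hrr, hww, habs]
    · right; right
      rw [hrr, hww, habs, neg_neg]
      rfl
end
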